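/- arXiv:2204.01250 — 2 statements merged into one kernel-verified Lean document; each statement's English description precedes it below -/
import Mathlib

section
/- Let B be an invertible, totally positive n×n real matrix. Then for every index i one has B(i,i) > 0 and B^{−1}(i,i) ≥ 1/B(i,i). -/
/-!
Pivoting on a positive `(0,0)` entry preserves total nonnegativity: the minors of the Schur
complement are the minors of `A` through row and column `0`, divided by `A 0 0`. Pivoting also
lowers every diagonal entry, so induction on the size gives Koteljanskii's inequality
`det A ≤ A i i * det A(i|i)`; the case `i = 0` is the case `i = n` for the matrix with rows and
columns reversed, and a zero pivot forces `det A = 0` through the `2 × 2` minors. For an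
invertible totally positive `B` this inequality is `B i i * B⁻¹ i i ≥ 1`, because
`B⁻¹ i i = det B(i|i) / det B`.
-/

open Matrix

/-- A matrix (over a linearly ordered index type) is totally positive if every minor,
obtained by selecting strictly increasing sequences of rows and columns, is nonnegative. -/
def TotallyPos {ι : Type*} [LinearOrder ι] (B : Matrix ι ι ℝ) : Prop :=
  ∀ (p : ℕ) (f g : Fin p → ι), StrictMono f → StrictMono g →
    0 ≤ (B.submatrix f g).det

namespace TotallyPos

variable {ι κ : Type*} [LinearOrder ι] [LinearOrder κ] {A : Matrix ι ι ℝ}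

theorem submatrix (hA : TotallyPos A) {f g : κ → ι} (hf : StrictMono f) (hg : StrictMono g) :
    TotallyPos (A.submatrix f g) := fun p f' g' hf' hg' => by
  simpa only [submatrix_submatrix] using hA p _ _ (hf.comp hf') (hg.comp hg')

theorem submatrix_of_strictAnti (hA : TotallyPos A) {f g : κ → ι} (hf : StrictAnti f)
    (hg : StrictAnti g) : TotallyPos (A.submatrix f g) := fun p f' g' hf' hg' => by
  rw [← det_submatrix_equiv_self Fin.revPerm, submatrix_submatrix, submatrix_submatrix]
  exact hA p _ _ ((hf.comp_strictMono hf').comp Fin.rev_strictAnti)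
    ((hg.comp_strictMono hg').comp Fin.rev_strictAnti)

theorem apply_nonneg (hA : TotallyPos A) (i j : ι) : 0 ≤ A i j := by
  simpa only [det_fin_one, submatrix_apply, cons_val_zero] using
    hA 1 ![i] ![j] strictMono_vecEmpty strictMono_vecEmpty

theorem mul_antidiag_le_mul_diag (hA : TotallyPos A) {i i' j j' : ι} (hi : i < i') (hj : j < j') :
    A i j' * A i' j ≤ A i j * A i' j' := by
  have h := hA 2 ![i, i'] ![j, j'] (strictMono_vecEmpty.vecCons hi)
    (strictMono_vecEmpty.vecCons hj)
  simp only [det_fin_two, submatrix_apply] at h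
  simpa [sub_nonneg] using h

theorem det_nonneg [Fintype ι] (hA : TotallyPos A) : 0 ≤ A.det := by
  let e := Fintype.orderIsoFinOfCardEq ι rfl
  rw [← det_submatrix_equiv_self e.toEquiv]
  exact hA _ e e e.strictMono e.strictMono

end TotallyPos

namespace Matrix

variable {K : Type*} [Field K] {n : ℕ}

def schurComplement₀₀ (A : Matrix (Fin (n + 1)) (Fin (n + 1)) K) : Matrix (Fin n) (Fin n) K :=
  of fun i j => A i.succ j.succ - A i.succ 0 * A 0 j.succ / A 0 0

theorem det_eq_mul_det_schurComplement₀₀ (A : Matrix (Fin (n + 1)) (Fin (n + 1)) K)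
    (h : A 0 0 ≠ 0) : A.det = A 0 0 * A.schurComplement₀₀.det := by
  let c : Fin (n + 1) → K := Fin.cases 0 fun i => A i.succ 0 / A 0 0
  let B : Matrix (Fin (n + 1)) (Fin (n + 1)) K := of fun i j => A i j - c i * A 0 j
  have hB : A.det = B.det := det_eq_of_forall_row_eq_smul_add_const c 0 rfl fun i j => by
    cases i using Fin.cases <;> simp [B, c]
  rw [hB, det_succ_column_zero, Fin.sum_univ_succ, Finset.sum_eq_zero fun i _ => by
    simp [B, c, h]]
  have hminor : B.submatrix Fin.succ Fin.succ = A.schurComplement₀₀ := by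
    ext i j
    simp only [submatrix_apply, of_apply, Fin.cases_succ, schurComplement₀₀, B, c]
    ring
  simp [hminor, B, c]

theorem det_submatrix_cons_zero {p : ℕ} (A : Matrix (Fin (n + 1)) (Fin (n + 1)) K)
    (h : A 0 0 ≠ 0) (f g : Fin p → Fin n) :
    (A.submatrix (Fin.cons 0 (Fin.succ ∘ f)) (Fin.cons 0 (Fin.succ ∘ g))).det =
      A 0 0 * (A.schurComplement₀₀.submatrix f g).det := by
  rw [det_eq_mul_det_schurComplement₀₀ _ (by simpa using h)]
  rfl

theorem det_submatrix_rev_succAbove_rev {R : Type*} [CommRing R]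
    (A : Matrix (Fin (n + 1)) (Fin (n + 1)) R) (i : Fin (n + 1)) :
    ((A.submatrix Fin.rev Fin.rev).submatrix i.rev.succAbove i.rev.succAbove).det =
      (A.submatrix i.succAbove i.succAbove).det := by
  have h : Fin.rev ∘ i.rev.succAbove = i.succAbove ∘ Fin.rev := funext fun j => by
    simp [Fin.rev_succAbove]
  rw [submatrix_submatrix, h, ← submatrix_submatrix]
  exact det_submatrix_equiv_self Fin.revPerm _

theorem inv_apply_self_eq_det_submatrix_div_det (A : Matrix (Fin (n + 1)) (Fin (n + 1)) K)
    (i : Fin (n + 1)) : A⁻¹ i i = (A.submatrix i.succAbove i.succAbove).det / A.det := by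
  rw [inv_def, Matrix.smul_apply, adjugate_fin_succ_eq_det_submatrix, Ring.inverse_eq_inv,
    smul_eq_mul, Even.neg_one_pow ⟨i, rfl⟩, one_mul, div_eq_inv_mul]

end Matrix

namespace TotallyPos

variable {n : ℕ} {A : Matrix (Fin (n + 1)) (Fin (n + 1)) ℝ}

theorem schurComplement₀₀ (hA : TotallyPos A) (h : 0 < A 0 0) :
    TotallyPos A.schurComplement₀₀ := by
  intro p f g hf hg
  have hcons {φ : Fin p → Fin n} (hφ : StrictMono φ) :
      StrictMono (Fin.cons 0 (Fin.succ ∘ φ) : Fin (p + 1) → Fin (n + 1)) :=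
    Fin.strictMono_cons.2 ⟨fun _ => Fin.succ_pos _, Fin.strictMono_succ.comp hφ⟩
  have hminor := hA _ _ _ (hcons hf) (hcons hg)
  rw [det_submatrix_cons_zero _ h.ne'] at hminor
  exact nonneg_of_mul_nonneg_right hminor h

theorem det_eq_zero_of_apply_zero_zero (hA : TotallyPos A) (h0 : A 0 0 = 0) : A.det = 0 := by
  by_cases hrow : ∀ j, A 0 j = 0
  · exact det_eq_zero_of_row_eq_zero 0 hrow
  obtain ⟨l, hl⟩ := not_forall.mp hrow
  have hl0 : 0 < l := (Fin.zero_le l).lt_of_ne (by rintro rfl; exact hl h0)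
  refine det_eq_zero_of_column_eq_zero 0 fun r => ?_
  rcases (Fin.zero_le r).eq_or_lt with rfl | hr
  · exact h0
  have h := hA.mul_antidiag_le_mul_diag hr hl0
  rw [h0, zero_mul] at h
  exact le_antisymm (nonpos_of_mul_nonpos_right h ((hA.apply_nonneg 0 l).lt_of_ne' hl))
    (hA.apply_nonneg r 0)

theorem det_le_mul_det_succAbove_succ {A : Matrix (Fin (n + 2)) (Fin (n + 2)) ℝ}
    (hA : TotallyPos A) (i : Fin (n + 1))
    (ih : ∀ S : Matrix (Fin (n + 1)) (Fin (n + 1)) ℝ, TotallyPos S →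
      S.det ≤ S i i * (S.submatrix i.succAbove i.succAbove).det) :
    A.det ≤ A i.succ i.succ * (A.submatrix i.succ.succAbove i.succ.succAbove).det := by
  have hminor : 0 ≤ (A.submatrix i.succ.succAbove i.succ.succAbove).det :=
    (hA.submatrix (Fin.strictMono_succAbove _) (Fin.strictMono_succAbove _)).det_nonneg
  rcases (hA.apply_nonneg 0 0).eq_or_lt with h0 | h0
  · rw [hA.det_eq_zero_of_apply_zero_zero h0.symm]
    exact mul_nonneg (hA.apply_nonneg _ _) hminor
  set S := A.schurComplement₀₀
  have hS : S.det ≤ S i i * (S.submatrix i.succAbove i.succAbove).det :=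
    ih S (hA.schurComplement₀₀ h0)
  have hSii : S i i ≤ A i.succ i.succ := sub_le_self _ <| div_nonneg
    (mul_nonneg (hA.apply_nonneg i.succ 0) (hA.apply_nonneg 0 i.succ)) h0.le
  have hSminor : 0 ≤ (S.submatrix i.succAbove i.succAbove).det :=
    ((hA.schurComplement₀₀ h0).submatrix (Fin.strictMono_succAbove _)
      (Fin.strictMono_succAbove _)).det_nonneg
  -- `A(i+1|i+1)` keeps row and column `0`, so pivoting it gives `S(i|i)`.
  have hcons : Fin.cons 0 (Fin.succ ∘ i.succAbove) = i.succ.succAbove := funext fun j => by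
    cases j using Fin.cases <;> simp
  calc A.det = A 0 0 * S.det := det_eq_mul_det_schurComplement₀₀ A h0.ne'
    _ ≤ A 0 0 * (A i.succ i.succ * (S.submatrix i.succAbove i.succAbove).det) := by
      gcongr
      exact hS.trans (mul_le_mul_of_nonneg_right hSii hSminor)
    _ = A i.succ i.succ * (A.submatrix i.succ.succAbove i.succ.succAbove).det := by
      rw [← hcons, det_submatrix_cons_zero A h0.ne']
      ring

theorem det_le_mul_det_succAbove (hA : TotallyPos A) (i : Fin (n + 1)) :
    A.det ≤ A i i * (A.submatrix i.succAbove i.succAbove).det := by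
  induction n with
  | zero => simp [Fin.fin_one_eq_zero i]
  | succ n ih =>
    cases i using Fin.cases with
    | succ i => exact hA.det_le_mul_det_succAbove_succ i fun S hS => ih hS i
    | zero =>
      have hrev := hA.submatrix_of_strictAnti Fin.rev_strictAnti Fin.rev_strictAnti
      have h := hrev.det_le_mul_det_succAbove_succ (Fin.last n) fun S hS => ih hS _
      have hdet : (A.submatrix Fin.rev Fin.rev).det = A.det :=
        det_submatrix_equiv_self Fin.revPerm A
      rw [Fin.succ_last, ← Fin.rev_zero, det_submatrix_rev_succAbove_rev, hdet] at h
      simpa using h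

end TotallyPos

/-- **Diagonal entries of a totally positive matrix and of its inverse.** If `B` is an
invertible, totally positive `n × n` real matrix, then `B(i,i) > 0` and
`B⁻¹(i,i) ≥ 1 / B(i,i)` for every index `i`. -/
theorem totallyPos_inv_diag (n : ℕ) (B : Matrix (Fin n) (Fin n) ℝ)
    (hB : IsUnit B.det) (htp : TotallyPos B) (i : Fin n) :
    0 < B i i ∧ 1 / B i i ≤ B⁻¹ i i := by
  obtain ⟨m, rfl⟩ : ∃ m, n = m + 1 := Nat.exists_eq_add_one.mpr i.pos
  have hdet : 0 < B.det := htp.det_nonneg.lt_of_ne' hB.ne_zero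
  have hle := htp.det_le_mul_det_succAbove i
  have hminor : 0 ≤ (B.submatrix i.succAbove i.succAbove).det :=
    (htp.submatrix (Fin.strictMono_succAbove i) (Fin.strictMono_succAbove i)).det_nonneg
  have hBii : 0 < B i i := (htp.apply_nonneg i i).lt_of_ne' fun h => by
    rw [h, zero_mul] at hle
    linarith
  refine ⟨hBii, ?_⟩
  rw [inv_apply_self_eq_det_submatrix_div_det, div_le_div_iff₀ hBii hdet, one_mul, mul_comm]
  exact hle
end

section
/- Let d ≥ 1 and ρ ∈ [0,1). Let (𝓕_n)_{n≥0} be an interval filtration on a d-dimensional rectangle I, and define for f ∈ L^1(I) the maximal function 𝓜f(x) = sup_n Σ_{A atom of 𝓕_n} ρ^{|d_n(A, A_n(x))|_1} / |conv(A, A_n(x))| · ∫_A |f(t)| dt. Then there exists a constant C depending only on the dimension d and on ρ such that |{ x ∈ I : 𝓜f(x) > λ }| ≤ C ‖f‖_{L^1(I)} / λ for every λ > 0 and every f ∈ L^1(I). -/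
open MeasureTheory Set

structure IntervalPartition where
  a : ℝ
  b : ℝ
  m : ℕ
  m_pos : 0 < m
  t : Fin (m + 1) → ℝ
  t_mono : StrictMono t
  t_first : t 0 = a
  t_last : t (Fin.last m) = b

namespace IntervalPartition

/-- The `i`-th breakpoint of the partition (extended to all of `ℕ`). -/
def pt (P : IntervalPartition) (i : ℕ) : ℝ :=
  P.t ⟨min i P.m, Nat.lt_succ_of_le (min_le_right _ _)⟩

/-- The underlying interval `[a, b)`. -/
def interval (P : IntervalPartition) : Set ℝ := Set.Ico P.a P.b

/-- The `i`-th atom of the partition, `[t_i, t_{i+1})`. -/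
def atomN (P : IntervalPartition) (i : ℕ) : Set ℝ := Set.Ico (P.pt i) (P.pt (i + 1))

/-- The length of the `i`-th atom. -/
def atomLen (P : IntervalPartition) (i : ℕ) : ℝ := P.pt (i + 1) - P.pt i

/-- Membership in the spline space `S_k(𝓕)`:  `(k-2)`-times continuously differentiable
on the interval and a polynomial of degree at most `k - 1` on each atom. -/
def IsSpline (k : ℕ) (P : IntervalPartition) (f : ℝ → ℝ) : Prop :=
  (2 ≤ k → ContDiffOn ℝ (k - 2 : ℕ) f P.interval) ∧
  ∀ i < P.m, ∃ p : Polynomial ℝ, p.natDegree ≤ k - 1 ∧ ∀ x ∈ P.atomN i, f x = p.eval x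

/-- `P.Refines Q` : `Q` is finer than `P` (same interval, more breakpoints). -/
def Refines (P Q : IntervalPartition) : Prop :=
  P.a = Q.a ∧ P.b = Q.b ∧ Set.range P.t ⊆ Set.range Q.t

/-- The pair `(i, j)` describes a B-spline support of order `r`:
the union of the consecutive atoms `i, …, j`, where either `j - i + 1 = r`, or
`j - i + 1 < r` and the union touches an endpoint of the interval. -/
def IsBSupportIdx (P : IntervalPartition) (r i j : ℕ) : Prop :=
  i ≤ j ∧ j < P.m ∧ (j + 1 - i = r ∨ (j + 1 - i < r ∧ (i = 0 ∨ j = P.m - 1)))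

/-- The B-spline support as a set. -/
def bSupportSet (P : IntervalPartition) (i j : ℕ) : Set ℝ := Set.Ico (P.pt i) (P.pt (j + 1))

/-- The length of a B-spline support. -/
def bSupportLen (P : IntervalPartition) (i j : ℕ) : ℝ := P.pt (j + 1) - P.pt i

/-- `k`-regularity with parameter `γ` of a single interval σ-algebra: any two B-spline
supports of order `k` at Euclidean distance zero have comparable lengths. -/
def KRegular (P : IntervalPartition) (k : ℕ) (γ : ℝ) : Prop :=
  ∀ i j i' j' : ℕ, P.IsBSupportIdx k i j → P.IsBSupportIdx k i' j' →
    P.pt i' ≤ P.pt (j + 1) → P.pt i ≤ P.pt (j' + 1) →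
    P.bSupportLen i j ≤ γ * P.bSupportLen i' j'

-- The index of the atom containing `x` (junk value if there is none).
open Classical in
noncomputable def idx (P : IntervalPartition) (x : ℝ) : ℕ :=
  if h : ∃ i, i < P.m ∧ x ∈ P.atomN i then h.choose else 0

end IntervalPartition

/-- The `d`-dimensional rectangle underlying a product of interval σ-algebras. -/
def rect {d : ℕ} (P : Fin d → IntervalPartition) : Set (Fin d → ℝ) :=
  Set.univ.pi fun δ => (P δ).interval

/-- The atom of the product σ-algebra with index vector `i`. -/
def prodAtomN {d : ℕ} (P : Fin d → IntervalPartition) (i : Fin d → ℕ) : Set (Fin d → ℝ) :=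
  Set.univ.pi fun δ => (P δ).atomN (i δ)

/-- `|d(A,B)|₁` for atoms with index vectors `i`, `j`. -/
def dist1 {d : ℕ} (i j : Fin d → ℕ) : ℕ := ∑ δ, ((i δ : ℤ) - (j δ : ℤ)).natAbs

/-- The volume of `conv(A, B)`, the smallest axis-parallel rectangle containing the
atoms with index vectors `i` and `j`. -/
def convVol {d : ℕ} (P : Fin d → IntervalPartition) (i j : Fin d → ℕ) : ℝ :=
  ∏ δ, ((P δ).pt (max (i δ) (j δ) + 1) - (P δ).pt (min (i δ) (j δ)))

/-- The kernel sum `Σ_A q^{|d(A, A_ix)|₁} / |conv(A, A_ix)| ∫_A |f|`. -/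
noncomputable def kern {d : ℕ} (P : Fin d → IntervalPartition) (q : ℝ)
    (f : (Fin d → ℝ) → ℝ) (ix : Fin d → ℕ) : ℝ :=
  ∑ ia : (∀ δ, Fin ((P δ).m)),
    q ^ dist1 (fun δ => (ia δ : ℕ)) ix / convVol P (fun δ => (ia δ : ℕ)) ix *
      ∫ y in prodAtomN P (fun δ => (ia δ : ℕ)), |f y|

/-- Coordinatewise `k`-regularity with parameter `γ` of a multivariate filtration. -/
def KRegularAll (d : ℕ) (F : ℕ → Fin d → IntervalPartition) (k : Fin d → ℕ) (γ : ℝ) : Prop :=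
  ∀ n δ, (F n δ).KRegular (k δ) γ

/-- Direction `r`-regularity with parameter `β`: there is no direction `δ`, no
monotone sequence of times `n 0 ≤ n 1 ≤ …`, no strictly decreasing chain of atoms
`prodAtomN (F (n 0)) (ix 0) ⊋ … ⊋ prodAtomN (F (n (β-1))) (ix (β-1))` and no B-spline
support `B` of order `r δ` in the `δ`-th coordinate of `F (n 0)` containing the `δ`-th
component of the first atom such that `B` is still a B-spline support of order `r δ`
in the `δ`-th coordinate of `F (n (β-1))`. -/
def DirRegular (d : ℕ) (F : ℕ → Fin d → IntervalPartition) (r : Fin d → ℕ) (β : ℕ) : Prop :=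
  ¬ ∃ (δ : Fin d) (n : ℕ → ℕ) (ix : ℕ → Fin d → ℕ) (i j : ℕ),
      (∀ l l', l ≤ l' → n l ≤ n l') ∧
      (∀ l, l < β → ∀ δ', ix l δ' < (F (n l) δ').m) ∧
      (∀ l l', l < l' → l' < β →
        prodAtomN (F (n l')) (ix l') ⊂ prodAtomN (F (n l)) (ix l)) ∧
      (F (n 0) δ).IsBSupportIdx (r δ) i j ∧
      (F (n 0) δ).atomN (ix 0 δ) ⊆ (F (n 0) δ).bSupportSet i j ∧
      ∃ i' j', (F (n (β - 1)) δ).IsBSupportIdx (r δ) i' j' ∧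
        (F (n (β - 1)) δ).bSupportSet i' j' = (F (n 0) δ).bSupportSet i j

/-- The tensor product spline space: the linear span of products of coordinate splines. -/
def TensorSplineSpan (d : ℕ) (k : Fin d → ℕ) (P : Fin d → IntervalPartition) :
    Submodule ℝ ((Fin d → ℝ) → ℝ) :=
  Submodule.span ℝ {G : (Fin d → ℝ) → ℝ |
    ∃ g : Fin d → ℝ → ℝ, (∀ δ, IntervalPartition.IsSpline (k δ) (P δ) (g δ)) ∧
      G = fun x => ∏ δ, g δ (x δ)}

/-- `g` is the orthogonal projection (in `L²` of the rectangle) of `f` onto the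
tensor product spline space. -/
def IsProj (d : ℕ) (k : Fin d → ℕ) (P : Fin d → IntervalPartition)
    (f g : (Fin d → ℝ) → ℝ) : Prop :=
  g ∈ TensorSplineSpan d k P ∧ ∀ h ∈ TensorSplineSpan d k P,
    ∫ x in rect P, g x * h x = ∫ x in rect P, f x * h x

/-- A multivariate interval filtration in standard form: it starts from the trivial
σ-algebra and at each step exactly one atom of exactly one coordinate σ-algebra is
split into two. -/
def StandardForm (d : ℕ) (F : ℕ → Fin d → IntervalPartition) : Prop :=
  (∀ δ, (F 0 δ).m = 1) ∧
  ∀ n, ∃ δ₀, (∀ δ, δ ≠ δ₀ → F (n + 1) δ = F n δ) ∧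
    (F n δ₀).Refines (F (n + 1) δ₀) ∧ (F (n + 1) δ₀).m = (F n δ₀).m + 1

open scoped ENNReal

/-!
Put `r = √ρ` and `Z = ∑_{s ∈ ℤ^d} r^{|s|₁}`, and split the kernel sum according to the
displacement `s` of `A` relative to `B = A_n(x)`. If the sum exceeds `λ`, some term exceeds its
share `r^{|s|₁} λ / Z`; as `ρ^{|s|₁} = r^{|s|₁} r^{|s|₁}`, this says
`λ |conv(A, B)| < Z r^{|s|₁} ∫_A |f|`.

For fixed `s`, select such pairs `(A, B)` greedily in time, keeping a pair when `B` misses the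
hulls `conv` of the pairs kept before. Refinement only adds breakpoints, so a later atom meeting
an earlier hull lies inside it, and the kept hulls cover every `B`. Two kept pairs have disjoint
atoms `A`: between two points a refinement has at least as many breakpoints as the coarser
partition, so if the two `A`s met, moving by `-s` from a common point would put the later `B`
into the earlier hull. Summing the hull volumes bounds the union of the `B`s by
`Z r^{|s|₁} ‖f‖₁ / λ`, and summing over `s` gives the constant `Z²`.
-/

namespace IntervalPartition

variable (P : IntervalPartition) {Q : IntervalPartition}

theorem pt_mono : Monotone P.pt := fun _ _ hij =>
  P.t_mono.monotone (by simp [Fin.le_def, min_le_min_right _ hij])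

theorem pt_lt_pt {i j : ℕ} (h : i < j) (hj : j ≤ P.m) : P.pt i < P.pt j :=
  P.t_mono (by simp [Fin.lt_def, min_eq_left (h.trans_le hj).le, min_eq_left hj, h])

theorem pt_zero : P.pt 0 = P.a := by
  simpa [pt] using P.t_first

theorem pt_m : P.pt P.m = P.b := by
  simp only [pt, min_self]; exact P.t_last

theorem lt_m_of_mem_atomN {i : ℕ} {y : ℝ} (hy : y ∈ P.atomN i) : i < P.m := by
  by_contra! h
  have : P.pt (i + 1) = P.pt i := by simp [pt, min_eq_right h, min_eq_right (h.trans i.le_succ)]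
  exact (hy.1.trans_lt hy.2).ne' this

theorem atomN_subset_interval {i : ℕ} (hi : i < P.m) : P.atomN i ⊆ P.interval := by
  rw [interval, ← P.pt_zero, ← P.pt_m]
  exact Ico_subset_Ico (P.pt_mono i.zero_le) (P.pt_mono hi)

theorem exists_mem_atomN {y : ℝ} (hy : y ∈ P.interval) : ∃ i < P.m, y ∈ P.atomN i := by
  rw [interval, ← P.pt_zero, ← P.pt_m] at hy
  obtain ⟨i, hi, hyi⟩ := mem_iUnion₂.mp (Ico_subset_biUnion_Ico P.m P.pt hy)
  exact ⟨i, Finset.mem_range.mp hi, hyi⟩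

theorem eq_of_mem_atomN {i j : ℕ} {y : ℝ} (hi : y ∈ P.atomN i) (hj : y ∈ P.atomN j) :
    i = j := by
  by_contra hne
  rcases Nat.lt_or_gt_of_ne hne with h | h
  · exact (hj.1.trans_lt hi.2).not_ge (P.pt_mono h)
  · exact (hi.1.trans_lt hj.2).not_ge (P.pt_mono h)

theorem idx_lt {y : ℝ} (hy : y ∈ P.interval) : P.idx y < P.m := by
  classical
  rw [idx, dif_pos (P.exists_mem_atomN hy)]
  exact (P.exists_mem_atomN hy).choose_spec.1

theorem mem_atomN_idx {y : ℝ} (hy : y ∈ P.interval) : y ∈ P.atomN (P.idx y) := by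
  classical
  rw [idx, dif_pos (P.exists_mem_atomN hy)]
  exact (P.exists_mem_atomN hy).choose_spec.2

def conv (i j : ℕ) : Set ℝ := Ico (P.pt (min i j)) (P.pt (max i j + 1))

theorem atomN_subset_conv (i j : ℕ) : P.atomN j ⊆ P.conv i j :=
  Ico_subset_Ico (P.pt_mono (min_le_right _ _)) (P.pt_mono (by omega))

theorem Refines.refl : P.Refines P := ⟨rfl, rfl, subset_rfl⟩

variable {P}

theorem Refines.trans {R : IntervalPartition} (h₁ : P.Refines Q) (h₂ : Q.Refines R) :
    P.Refines R :=
  ⟨h₁.1.trans h₂.1, h₁.2.1.trans h₂.2.1, h₁.2.2.trans h₂.2.2⟩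

theorem Refines.interval_eq (h : P.Refines Q) : P.interval = Q.interval := by
  rw [interval, interval, h.1, h.2.1]

theorem Refines.exists_pt_eq (h : P.Refines Q) {i : ℕ} (hi : i ≤ P.m) :
    ∃ j ≤ Q.m, Q.pt j = P.pt i := by
  obtain ⟨j, hj⟩ := h.2.2 ⟨⟨i, Nat.lt_succ_of_le hi⟩, rfl⟩
  exact ⟨j, Nat.lt_succ_iff.mp j.isLt, by simp [pt, min_eq_left hi, hj,
    min_eq_left (Nat.lt_succ_iff.mp j.isLt)]⟩

/-- `j`, `j'` are indices in `Q` of the breakpoints `i ≤ i'` of `P`: a refinement has at least as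
many breakpoints between them. -/
theorem Refines.add_sub_le (h : P.Refines Q) {i i' j j' : ℕ} (hii' : i ≤ i') (hi' : i' ≤ P.m)
    (hjm : j ≤ Q.m) (hj : Q.pt j = P.pt i) (hj' : Q.pt j' = P.pt i') : j + (i' - i) ≤ j' := by
  induction i', hii' using Nat.le_induction generalizing j' with
  | base =>
    by_contra! hlt
    exact (Q.pt_lt_pt (by omega) hjm).ne (hj'.trans hj.symm)
  | succ k hik ih =>
    obtain ⟨j'', -, hj''⟩ := h.exists_pt_eq (k.le_succ.trans hi')
    have hlt : j'' < j' :=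
      Q.pt_mono.reflect_lt (by rw [hj'', hj']; exact P.pt_lt_pt k.lt_succ_self hi')
    have := ih (k.le_succ.trans hi') hj''
    omega

theorem Refines.atomN_subset_Ico (h : P.Refines Q) {k lo hi : ℕ} (hlo : lo ≤ P.m)
    (hhi : hi ≤ P.m) (hne : (Q.atomN k ∩ Ico (P.pt lo) (P.pt hi)).Nonempty) :
    Q.atomN k ⊆ Ico (P.pt lo) (P.pt hi) := by
  obtain ⟨x, hxk, hx⟩ := hne
  obtain ⟨j, -, hj⟩ := h.exists_pt_eq hlo
  obtain ⟨j', -, hj'⟩ := h.exists_pt_eq hhi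
  have hjk : j < k + 1 := Q.pt_mono.reflect_lt (hj ▸ hx.1.trans_lt hxk.2)
  have hkj : k < j' := Q.pt_mono.reflect_lt (hj' ▸ hxk.1.trans_lt hx.2)
  rw [← hj, ← hj']
  exact Ico_subset_Ico (Q.pt_mono (by omega)) (Q.pt_mono hkj)

theorem Refines.atomN_inter_conv_nonempty (h : P.Refines Q) {y : ℝ} {a b a' b' : ℕ}
    (hb : b < P.m) (hb' : b' < Q.m) (hs : (a : ℤ) - b = a' - b')
    (hya : y ∈ P.atomN a) (hya' : y ∈ Q.atomN a') : (Q.atomN b' ∩ P.conv a b).Nonempty := by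
  have ha := P.lt_m_of_mem_atomN hya
  have hupper : Q.pt b' < P.pt (max a b + 1) := by
    rcases le_total b a with hba | hab
    · calc Q.pt b' ≤ Q.pt a' := Q.pt_mono (by omega)
        _ ≤ y := hya'.1
        _ < P.pt (a + 1) := hya.2
        _ ≤ P.pt (max a b + 1) := P.pt_mono (by omega)
    · obtain ⟨j, hjm, hj⟩ := h.exists_pt_eq (i := a + 1) ha
      obtain ⟨j', hj'm, hj'⟩ := h.exists_pt_eq (i := b + 1) hb
      have hcount := h.add_sub_le (by omega) hb hjm hj hj'
      have haj : a' < j := Q.pt_mono.reflect_lt (hj ▸ hya'.1.trans_lt hya.2)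
      calc Q.pt b' < Q.pt j' := Q.pt_lt_pt (by omega) hj'm
        _ = P.pt (b + 1) := hj'
        _ ≤ P.pt (max a b + 1) := P.pt_mono (by omega)
  have hlower : P.pt (min a b) < Q.pt (b' + 1) := by
    rcases le_total b a with hba | hab
    · obtain ⟨j, hjm, hj⟩ := h.exists_pt_eq (i := b) hb.le
      obtain ⟨j', -, hj'⟩ := h.exists_pt_eq (i := a) ha.le
      have hcount := h.add_sub_le hba ha.le hjm hj hj'
      have hja : j' < a' + 1 := Q.pt_mono.reflect_lt (hj' ▸ hya.1.trans_lt hya'.2)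
      calc P.pt (min a b) ≤ P.pt b := P.pt_mono (min_le_right _ _)
        _ = Q.pt j := hj.symm
        _ < Q.pt (b' + 1) := Q.pt_lt_pt (by omega) hb'
    · calc P.pt (min a b) ≤ P.pt a := P.pt_mono (min_le_left _ _)
        _ ≤ y := hya.1
        _ < Q.pt (a' + 1) := hya'.2
        _ ≤ Q.pt (b' + 1) := Q.pt_mono (by omega)
  rw [atomN, conv, Ico_inter_Ico, nonempty_Ico, max_lt_iff, lt_min_iff, lt_min_iff]
  exact ⟨⟨Q.pt_lt_pt b'.lt_succ_self hb', hupper⟩, hlower, P.pt_lt_pt (by omega) (by omega)⟩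

end IntervalPartition

section Rectangles

open IntervalPartition

variable {d : ℕ}

def convSet (P : Fin d → IntervalPartition) (a b : Fin d → ℕ) : Set (Fin d → ℝ) :=
  univ.pi fun δ => (P δ).conv (a δ) (b δ)

theorem measurableSet_prodAtomN (P : Fin d → IntervalPartition) (a : Fin d → ℕ) :
    MeasurableSet (prodAtomN P a) :=
  MeasurableSet.univ_pi fun _ => measurableSet_Ico

theorem prodAtomN_subset_rect (P : Fin d → IntervalPartition) {a : Fin d → ℕ}
    (ha : ∀ δ, a δ < (P δ).m) : prodAtomN P a ⊆ rect P :=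
  pi_mono fun δ _ => (P δ).atomN_subset_interval (ha δ)

theorem mem_prodAtomN_idx {P : Fin d → IntervalPartition} {x : Fin d → ℝ} (hx : x ∈ rect P) :
    x ∈ prodAtomN P fun δ => (P δ).idx (x δ) :=
  fun δ _ => (P δ).mem_atomN_idx (hx δ trivial)

theorem disjoint_prodAtomN {P : Fin d → IntervalPartition} {a a' : Fin d → ℕ} (h : a ≠ a') :
    Disjoint (prodAtomN P a) (prodAtomN P a') := by
  obtain ⟨δ, hδ⟩ := Function.ne_iff.mp h
  exact disjoint_left.mpr fun x hx hx' =>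
    hδ ((P δ).eq_of_mem_atomN (hx δ trivial) (hx' δ trivial))

theorem prodAtomN_subset_convSet (P : Fin d → IntervalPartition) (a b : Fin d → ℕ) :
    prodAtomN P b ⊆ convSet P a b :=
  pi_mono fun δ _ => (P δ).atomN_subset_conv _ _

theorem volume_convSet (P : Fin d → IntervalPartition) (a b : Fin d → ℕ) :
    volume (convSet P a b) = ENNReal.ofReal (convVol P a b) := by
  have hlen : ∀ δ, 0 ≤ (P δ).pt (max (a δ) (b δ) + 1) - (P δ).pt (min (a δ) (b δ)) :=
    fun δ => sub_nonneg.mpr ((P δ).pt_mono (by omega))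
  rw [convSet, volume_pi_pi, convVol, ENNReal.ofReal_prod_of_nonneg fun δ _ => hlen δ]
  exact Finset.prod_congr rfl fun δ _ => Real.volume_Ico

variable {P Q : Fin d → IntervalPartition}

theorem prodAtomN_subset_convSet_of_nonempty (h : ∀ δ, (P δ).Refines (Q δ))
    {a b c : Fin d → ℕ} (ha : ∀ δ, a δ < (P δ).m) (hb : ∀ δ, b δ < (P δ).m)
    (hne : (prodAtomN Q c ∩ convSet P a b).Nonempty) : prodAtomN Q c ⊆ convSet P a b := by
  rw [prodAtomN, convSet, ← pi_inter_distrib, univ_pi_nonempty_iff] at hne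
  refine pi_mono fun δ _ => (h δ).atomN_subset_Ico ?_ ?_ (hne δ)
  · exact (min_le_left _ _).trans (ha δ).le
  · exact max_lt (ha δ) (hb δ)

theorem inter_convSet_nonempty_of_refines (h : ∀ δ, (P δ).Refines (Q δ)) {a b a' b' : Fin d → ℕ}
    (hb : ∀ δ, b δ < (P δ).m) (hb' : ∀ δ, b' δ < (Q δ).m)
    (hs : ∀ δ, (a δ : ℤ) - b δ = a' δ - b' δ)
    (hne : (prodAtomN P a ∩ prodAtomN Q a').Nonempty) :
    (prodAtomN Q b' ∩ convSet P a b).Nonempty := by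
  obtain ⟨y, hya, hya'⟩ := hne
  rw [prodAtomN, convSet, ← pi_inter_distrib, univ_pi_nonempty_iff]
  exact fun δ => (h δ).atomN_inter_conv_nonempty (hb δ) (hb' δ) (hs δ) (hya δ trivial)
    (hya' δ trivial)

theorem refines_of_le {F : ℕ → Fin d → IntervalPartition}
    (hF : ∀ n δ, (F n δ).Refines (F (n + 1) δ)) {m n : ℕ} (h : m ≤ n) (δ : Fin d) :
    (F m δ).Refines (F n δ) := by
  induction n, h using Nat.le_induction with
  | base => exact Refines.refl _
  | succ n _ ih => exact ih.trans (hF n δ)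

theorem rect_eq_rect_zero {F : ℕ → Fin d → IntervalPartition}
    (hF : ∀ n δ, (F n δ).Refines (F (n + 1) δ)) (n : ℕ) : rect (F n) = rect (F 0) :=
  pi_congr rfl fun δ _ => (refines_of_le hF n.zero_le δ).interval_eq.symm

end Rectangles

section GreedySelection

variable {α X : Type*} (τ : α → ℕ) (S : Set α) (B C : α → Set X)

def greedyUpTo : ℕ → Set α
  | 0 => {p ∈ S | τ p = 0}
  | n + 1 => greedyUpTo n ∪ {p ∈ S | τ p = n + 1 ∧ ∀ q ∈ greedyUpTo n, Disjoint (B p) (C q)}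

variable {τ S B C}

theorem mem_greedyUpTo {p : α} {n : ℕ} (hp : p ∈ greedyUpTo τ S B C n) : p ∈ S ∧ τ p ≤ n := by
  induction n with
  | zero => exact ⟨hp.1, hp.2.le⟩
  | succ n ih =>
    rcases hp with hp | hp
    · exact ⟨(ih hp).1, (ih hp).2.trans n.le_succ⟩
    · exact ⟨hp.1, hp.2.1.le⟩

theorem greedyUpTo_mono : Monotone (greedyUpTo τ S B C) :=
  monotone_nat_of_le_succ fun _ => subset_union_left

theorem mem_greedyUpTo_time {p : α} {n : ℕ} (hp : p ∈ greedyUpTo τ S B C n) :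
    p ∈ greedyUpTo τ S B C (τ p) := by
  induction n with
  | zero => rwa [hp.2]
  | succ n ih =>
    rcases hp with hp | hp
    · exact ih hp
    · rw [hp.2.1]; exact Or.inr hp

variable (τ S B C)

theorem exists_greedy_subfamily : ∃ K ⊆ S,
    (∀ p ∈ S, p ∈ K ∨ ∃ q ∈ K, τ q < τ p ∧ ¬Disjoint (B p) (C q)) ∧
    ∀ p ∈ K, ∀ q ∈ K, τ p < τ q → Disjoint (B q) (C p) := by
  refine ⟨{p | p ∈ greedyUpTo τ S B C (τ p)}, fun p hp => (mem_greedyUpTo hp).1, ?_, ?_⟩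
  · intro p hp
    rcases hτ : τ p with _ | n
    · left
      rw [mem_ofPred_eq, hτ]
      exact ⟨hp, hτ⟩
    · by_cases hall : ∀ q ∈ greedyUpTo τ S B C n, Disjoint (B p) (C q)
      · left
        rw [mem_ofPred_eq, hτ]
        exact Or.inr ⟨hp, hτ, hall⟩
      · right
        push Not at hall
        obtain ⟨q, hq, hpq⟩ := hall
        exact ⟨q, mem_greedyUpTo_time hq, by have := (mem_greedyUpTo hq).2; omega, hpq⟩
  · intro p hp q hq hlt
    obtain ⟨n, hn⟩ : ∃ n, τ q = n + 1 := ⟨τ q - 1, by omega⟩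
    rw [mem_ofPred_eq, hn] at hq
    rcases hq with hq | hq
    · exact absurd (mem_greedyUpTo hq).2 (by omega)
    · exact hq.2.2 p (greedyUpTo_mono (by omega) hp)

end GreedySelection

theorem measure_biUnion_le_mul_setLIntegral {α ι : Type*} [MeasurableSpace α] {μ : Measure α}
    {K : Set ι} (hK : K.Countable) {A C : ι → Set α} {I : Set α} {c : ℝ≥0∞} {g : α → ℝ≥0∞}
    (hA : ∀ i ∈ K, MeasurableSet (A i)) (hdisj : K.PairwiseDisjoint A) (hAI : ∀ i ∈ K, A i ⊆ I)
    (hC : ∀ i ∈ K, μ (C i) ≤ c * ∫⁻ x in A i, g x ∂μ) :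
    μ (⋃ i ∈ K, C i) ≤ c * ∫⁻ x in I, g x ∂μ :=
  calc μ (⋃ i ∈ K, C i) ≤ ∑' i : K, μ (C i) := measure_biUnion_le μ hK C
    _ ≤ ∑' i : K, c * ∫⁻ x in A i, g x ∂μ := ENNReal.tsum_le_tsum fun i => hC i i.2
    _ = c * ∫⁻ x in ⋃ i ∈ K, A i, g x ∂μ := by
      rw [ENNReal.tsum_mul_left, lintegral_biUnion hK hA hdisj]
    _ ≤ c * ∫⁻ x in I, g x ∂μ := by gcongr; exact iUnion₂_subset hAI

section Filtration

variable {d : ℕ}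

structure AtomPair (d : ℕ) where
  n : ℕ
  a : Fin d → ℕ
  b : Fin d → ℕ

instance : Countable (AtomPair d) :=
  Function.Injective.countable (f := fun p : AtomPair d => (p.n, p.a, p.b))
    fun ⟨_, _, _⟩ ⟨_, _, _⟩ h => by simpa using h

def IsAtomPair (F : ℕ → Fin d → IntervalPartition) (s : Fin d → ℤ) (p : AtomPair d) : Prop :=
  ∀ δ, p.a δ < (F p.n δ).m ∧ p.b δ < (F p.n δ).m ∧ (p.a δ : ℤ) - p.b δ = s δ

variable {F : ℕ → Fin d → IntervalPartition} {s : Fin d → ℤ} {p q : AtomPair d}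

theorem IsAtomPair.disjoint_of_n_eq (hp : IsAtomPair F s p) (hq : IsAtomPair F s q)
    (hn : p.n = q.n) (hpq : p ≠ q) :
    Disjoint (prodAtomN (F p.n) p.a) (prodAtomN (F q.n) q.a) := by
  rw [hn]
  refine disjoint_prodAtomN fun ha => hpq ?_
  have hb : p.b = q.b := funext fun δ => by
    have := (hp δ).2.2
    have := (hq δ).2.2
    have := congrFun ha δ
    omega
  cases p; cases q
  simp_all

theorem IsAtomPair.inter_convSet_nonempty (hF : ∀ n δ, (F n δ).Refines (F (n + 1) δ))
    (hp : IsAtomPair F s p) (hq : IsAtomPair F s q) (hle : p.n ≤ q.n)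
    (hne : (prodAtomN (F p.n) p.a ∩ prodAtomN (F q.n) q.a).Nonempty) :
    (prodAtomN (F q.n) q.b ∩ convSet (F p.n) p.a p.b).Nonempty :=
  inter_convSet_nonempty_of_refines (refines_of_le hF hle) (fun δ => (hp δ).2.1)
    (fun δ => (hq δ).2.1) (fun δ => (hp δ).2.2.trans (hq δ).2.2.symm) hne

theorem volume_biUnion_prodAtomN_le (hF : ∀ n δ, (F n δ).Refines (F (n + 1) δ))
    {S : Set (AtomPair d)} (hS : ∀ p ∈ S, IsAtomPair F s p) {c : ℝ≥0∞}
    {g : (Fin d → ℝ) → ℝ≥0∞}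
    (hc : ∀ p ∈ S, volume (convSet (F p.n) p.a p.b) ≤ c * ∫⁻ y in prodAtomN (F p.n) p.a, g y) :
    volume (⋃ p ∈ S, prodAtomN (F p.n) p.b) ≤ c * ∫⁻ y in rect (F 0), g y := by
  obtain ⟨K, hKS, hcover, hsep⟩ := exists_greedy_subfamily AtomPair.n S
    (fun p => prodAtomN (F p.n) p.b) (fun p => convSet (F p.n) p.a p.b)
  have hsub : ⋃ p ∈ S, prodAtomN (F p.n) p.b ⊆ ⋃ q ∈ K, convSet (F q.n) q.a q.b := by
    refine iUnion₂_subset fun p hp => ?_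
    rcases hcover p hp with hpK | ⟨q, hqK, hlt, hpq⟩
    · exact fun x hx => mem_biUnion hpK (prodAtomN_subset_convSet _ _ _ hx)
    · have hq := hS q (hKS hqK)
      have hBC := prodAtomN_subset_convSet_of_nonempty (refines_of_le hF hlt.le)
        (fun δ => (hq δ).1) (fun δ => (hq δ).2.1) (not_disjoint_iff_nonempty_inter.mp hpq)
      exact fun x hx => mem_biUnion hqK (hBC hx)
  have hsep' : ∀ p ∈ K, ∀ q ∈ K, p.n < q.n →
      Disjoint (prodAtomN (F p.n) p.a) (prodAtomN (F q.n) q.a) := fun p hp q hq hlt =>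
    not_not.mp fun hne => not_disjoint_iff_nonempty_inter.mpr
      ((hS p (hKS hp)).inter_convSet_nonempty hF (hS q (hKS hq)) hlt.le
        (not_disjoint_iff_nonempty_inter.mp hne)) (hsep p hp q hq hlt)
  have hdisj : K.PairwiseDisjoint fun p => prodAtomN (F p.n) p.a := by
    intro p hp q hq hpq
    rcases lt_trichotomy p.n q.n with hlt | heq | hgt
    · exact hsep' p hp q hq hlt
    · exact (hS p (hKS hp)).disjoint_of_n_eq (hS q (hKS hq)) heq hpq
    · exact (hsep' q hq p hp hgt).symm
  have hrect : ∀ p ∈ K, prodAtomN (F p.n) p.a ⊆ rect (F 0) := fun p hp =>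
    rect_eq_rect_zero hF p.n ▸ prodAtomN_subset_rect _ fun δ => (hS p (hKS hp) δ).1
  calc volume (⋃ p ∈ S, prodAtomN (F p.n) p.b)
      ≤ volume (⋃ q ∈ K, convSet (F q.n) q.a q.b) := measure_mono hsub
    _ ≤ c * ∫⁻ y in rect (F 0), g y :=
      measure_biUnion_le_mul_setLIntegral K.to_countable
        (fun p _ => measurableSet_prodAtomN _ _) hdisj hrect fun p hp => hc p (hKS hp)

end Filtration

section WeakType

variable {d : ℕ}

def normL1 (s : Fin d → ℤ) : ℕ := ∑ δ, (s δ).natAbs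

theorem summable_pow_normL1 {u : ℝ} (hu0 : 0 ≤ u) (hu1 : u < 1) :
    ∀ d, Summable fun s : Fin d → ℤ => u ^ normL1 s
  | 0 => .of_finite
  | d + 1 => by
    have hgeom := summable_geometric_of_lt_one hu0 hu1
    have hint : Summable fun t : ℤ => u ^ t.natAbs :=
      .of_nat_of_neg (by simpa using hgeom) (by simpa using hgeom)
    have hprod := hint.mul_of_nonneg (summable_pow_normL1 hu0 hu1 d)
      (fun _ => pow_nonneg hu0 _) (fun _ => pow_nonneg hu0 _)
    refine (Equiv.summable_iff (Fin.consEquiv fun _ => ℤ)).mp (hprod.congr fun p => ?_)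
    simp [normL1, Fin.consEquiv, Fin.sum_univ_succ, pow_add]

theorem one_le_tsum_pow_normL1 {u : ℝ} (hu0 : 0 ≤ u) (hu1 : u < 1) :
    1 ≤ ∑' s : Fin d → ℤ, u ^ normL1 s := by
  have h0 : u ^ normL1 (0 : Fin d → ℤ) ≤ ∑' s : Fin d → ℤ, u ^ normL1 s :=
    (summable_pow_normL1 hu0 hu1 d).le_tsum 0 fun _ _ => pow_nonneg hu0 _
  simpa [normL1] using h0

theorem sum_pow_dist1_le_tsum (P : Fin d → IntervalPartition) (ix : Fin d → ℕ) {r : ℝ}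
    (hr0 : 0 ≤ r) (hr1 : r < 1) :
    ∑ ia : (∀ δ, Fin (P δ).m), r ^ dist1 (fun δ => (ia δ : ℕ)) ix ≤
      ∑' s : Fin d → ℤ, r ^ normL1 s := by
  rw [← tsum_fintype (L := .unconditional _)]
  refine tsum_comp_le_tsum_of_inj (summable_pow_normL1 hr0 hr1 d) (fun _ => pow_nonneg hr0 _)
    (i := fun ia δ => ((ia δ : ℕ) : ℤ) - ix δ) fun ia ia' h => funext fun δ => Fin.ext ?_
  have : ((ia δ : ℕ) : ℤ) - ix δ = ((ia' δ : ℕ) : ℤ) - ix δ := congrFun h δ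
  omega

theorem convVol_pos (P : Fin d → IntervalPartition) {a b : Fin d → ℕ}
    (ha : ∀ δ, a δ < (P δ).m) (hb : ∀ δ, b δ < (P δ).m) : 0 < convVol P a b :=
  Finset.prod_pos fun δ _ => sub_pos.mpr <|
    (P δ).pt_lt_pt (by omega) (by have := ha δ; have := hb δ; omega)

/-- Pigeonhole with the weights `r ^ |s|₁ / ∑' s, r ^ |s|₁`, which sum to at most `1`. -/
theorem exists_heavy_atom_of_lt_kern {P : Fin d → IntervalPartition} {ρ r lam : ℝ}
    {f : (Fin d → ℝ) → ℝ} {ix : Fin d → ℕ} (hix : ∀ δ, ix δ < (P δ).m) (hρ0 : 0 ≤ ρ)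
    (hρr : ρ ≤ r ^ 2) (hr0 : 0 ≤ r) (hr1 : r < 1) (hlam : 0 ≤ lam) (h : lam < kern P ρ f ix) :
    ∃ a : Fin d → ℕ, (∀ δ, a δ < (P δ).m) ∧ lam * convVol P a ix <
      (∑' s : Fin d → ℤ, r ^ normL1 s) * r ^ dist1 a ix * ∫ y in prodAtomN P a, |f y| := by
  set Z := ∑' s : Fin d → ℤ, r ^ normL1 s
  have hZ : 0 < Z := one_pos.trans_le (one_le_tsum_pow_normL1 hr0 hr1)
  have hweights : ∑ ia : (∀ δ, Fin (P δ).m), r ^ dist1 (fun δ => (ia δ : ℕ)) ix / Z * lam ≤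
      lam := by
    rw [← Finset.sum_mul, ← Finset.sum_div]
    exact mul_le_of_le_one_left hlam
      ((div_le_one hZ).mpr (sum_pow_dist1_le_tsum P ix hr0 hr1))
  obtain ⟨ia, -, hia⟩ := Finset.exists_lt_of_sum_lt (hweights.trans_lt h)
  set a : Fin d → ℕ := fun δ => ia δ
  set k := dist1 a ix
  have hconv : 0 < convVol P a ix := convVol_pos P (fun δ => (ia δ).isLt) hix
  have hρk : ρ ^ k ≤ r ^ k * r ^ k := by
    rw [← mul_pow, ← sq]; exact pow_le_pow_left₀ hρ0 hρr k
  have hint : 0 ≤ ∫ y in prodAtomN P a, |f y| := integral_nonneg fun _ => abs_nonneg _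
  refine ⟨a, fun δ => (ia δ).isLt, lt_of_mul_lt_mul_left ?_ (pow_nonneg hr0 k)⟩
  calc r ^ k * (lam * convVol P a ix) = Z * (r ^ k / Z * lam) * convVol P a ix := by
        field_simp
    _ < Z * (ρ ^ k / convVol P a ix * ∫ y in prodAtomN P a, |f y|) * convVol P a ix := by
        gcongr
    _ = Z * ρ ^ k * ∫ y in prodAtomN P a, |f y| := by field_simp
    _ ≤ Z * (r ^ k * r ^ k) * ∫ y in prodAtomN P a, |f y| := by gcongr
    _ = r ^ k * (Z * r ^ k * ∫ y in prodAtomN P a, |f y|) := by ring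

def heavyPairs (F : ℕ → Fin d → IntervalPartition) (f : (Fin d → ℝ) → ℝ) (lam c : ℝ)
    (s : Fin d → ℤ) : Set (AtomPair d) :=
  {p | IsAtomPair F s p ∧
    lam * convVol (F p.n) p.a p.b < c * ∫ y in prodAtomN (F p.n) p.a, |f y|}

variable {F : ℕ → Fin d → IntervalPartition} {f : (Fin d → ℝ) → ℝ} {lam : ℝ}

theorem superlevel_subset_iUnion_heavyPairs (hF : ∀ n δ, (F n δ).Refines (F (n + 1) δ))
    {ρ r : ℝ} (hρ0 : 0 ≤ ρ) (hρr : ρ ≤ r ^ 2) (hr0 : 0 ≤ r) (hr1 : r < 1) (hlam : 0 ≤ lam) :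
    {x | x ∈ rect (F 0) ∧ ∃ n, lam < kern (F n) ρ f fun δ => (F n δ).idx (x δ)} ⊆
      ⋃ s : Fin d → ℤ,
        ⋃ p ∈ heavyPairs F f lam ((∑' s : Fin d → ℤ, r ^ normL1 s) * r ^ normL1 s) s,
          prodAtomN (F p.n) p.b := by
  rintro x ⟨hx, n, hlt⟩
  rw [← rect_eq_rect_zero hF n] at hx
  have hix : ∀ δ, (F n δ).idx (x δ) < (F n δ).m := fun δ => (F n δ).idx_lt (hx δ trivial)
  obtain ⟨a, ha, hheavy⟩ := exists_heavy_atom_of_lt_kern hix hρ0 hρr hr0 hr1 hlam hlt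
  exact mem_iUnion.mpr ⟨_, mem_biUnion (x := ⟨n, a, fun δ => (F n δ).idx (x δ)⟩)
    ⟨fun δ => ⟨ha δ, hix δ, rfl⟩, hheavy⟩ (mem_prodAtomN_idx hx)⟩

theorem volume_convSet_le_of_mem_heavyPairs {c : ℝ} {s : Fin d → ℤ} {p : AtomPair d}
    (hlam : 0 < lam) (hp : p ∈ heavyPairs F f lam c s) :
    volume (convSet (F p.n) p.a p.b) ≤
      ENNReal.ofReal (c / lam) * ∫⁻ y in prodAtomN (F p.n) p.a, ‖f y‖ₑ := by
  have hint : 0 ≤ ∫ y in prodAtomN (F p.n) p.a, |f y| := integral_nonneg fun _ => abs_nonneg _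
  rw [volume_convSet]
  calc ENNReal.ofReal (convVol (F p.n) p.a p.b)
      ≤ ENNReal.ofReal (c / lam * ∫ y in prodAtomN (F p.n) p.a, |f y|) := by
        refine ENNReal.ofReal_le_ofReal ?_
        rw [div_mul_eq_mul_div, le_div_iff₀ hlam, mul_comm]
        exact hp.2.le
    _ = ENNReal.ofReal (c / lam) * ‖∫ y in prodAtomN (F p.n) p.a, |f y|‖ₑ := by
        rw [ENNReal.ofReal_mul' hint, Real.enorm_of_nonneg hint]
    _ ≤ ENNReal.ofReal (c / lam) * ∫⁻ y in prodAtomN (F p.n) p.a, ‖f y‖ₑ := by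
        gcongr
        simpa using enorm_integral_le_lintegral_enorm fun y => |f y|

end WeakType

theorem maximal_weak_type_general (d : ℕ) (ρ : ℝ) (hρ0 : 0 ≤ ρ) (hρ1 : ρ < 1) :
    ∃ C : ℝ, 0 < C ∧
      ∀ F : ℕ → Fin d → IntervalPartition,
        (∀ n δ, (F n δ).Refines (F (n + 1) δ)) →
        ∀ f : (Fin d → ℝ) → ℝ, IntegrableOn f (rect (F 0)) →
        ∀ lam : ℝ, 0 < lam →
          volume {x | x ∈ rect (F 0) ∧
              ∃ n, lam < kern (F n) ρ f (fun δ => (F n δ).idx (x δ))} ≤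
            ENNReal.ofReal (C * (∫ y in rect (F 0), |f y|) / lam) := by
  set r := √ρ
  have hr0 : 0 ≤ r := Real.sqrt_nonneg ρ
  have hr1 : r < 1 := by simpa using Real.sqrt_lt_sqrt hρ0 hρ1
  have hρr : ρ ≤ r ^ 2 := (Real.sq_sqrt hρ0).ge
  set Z := ∑' s : Fin d → ℤ, r ^ normL1 s with hZdef
  have hZ : 1 ≤ Z := one_le_tsum_pow_normL1 hr0 hr1
  refine ⟨Z ^ 2, by positivity, fun F hF f hf lam hlam => ?_⟩
  have hsum : Summable fun s : Fin d → ℤ => Z * r ^ normL1 s / lam :=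
    ((summable_pow_normL1 hr0 hr1 d).mul_left Z).div_const lam
  calc volume {x | x ∈ rect (F 0) ∧ ∃ n, lam < kern (F n) ρ f fun δ => (F n δ).idx (x δ)}
      ≤ volume (⋃ s, ⋃ p ∈ heavyPairs F f lam (Z * r ^ normL1 s) s, prodAtomN (F p.n) p.b) :=
        measure_mono (superlevel_subset_iUnion_heavyPairs hF hρ0 hρr hr0 hr1 hlam.le)
    _ ≤ ∑' s, volume (⋃ p ∈ heavyPairs F f lam (Z * r ^ normL1 s) s, prodAtomN (F p.n) p.b) :=
        measure_iUnion_le _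
    _ ≤ ∑' s, ENNReal.ofReal (Z * r ^ normL1 s / lam) * ∫⁻ y in rect (F 0), ‖f y‖ₑ :=
        ENNReal.tsum_le_tsum fun s => volume_biUnion_prodAtomN_le hF (fun _ hp => hp.1)
          fun _ hp => volume_convSet_le_of_mem_heavyPairs hlam hp
    _ = ENNReal.ofReal (Z ^ 2 * (∫ y in rect (F 0), |f y|) / lam) := by
        rw [ENNReal.tsum_mul_right, ← ENNReal.ofReal_tsum_of_nonneg (fun _ => by positivity) hsum,
          tsum_div_const, tsum_mul_left, ← ofReal_integral_norm_eq_lintegral_enorm hf,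
          ← ENNReal.ofReal_mul (by positivity)]
        simp only [Real.norm_eq_abs, ← hZdef]
        ring_nf

/-- **Weak type (1,1) of the maximal function (Theorem 2.10 / `Passenbrunner2021`).**
For an interval filtration `(𝓕_n)` on a `d`-dimensional rectangle `I` and `ρ ∈ [0,1)`,
the maximal function
`𝓜f(x) = sup_n Σ_{A atom of 𝓕_n} ρ^{|d_n(A, A_n(x))|₁} / |conv(A, A_n(x))| ∫_A |f|`
is of weak type `(1,1)` with a constant depending only on `d` and `ρ`; the superlevel
set `{𝓜 f > λ}` is expressed as `{x : ∃ n, λ < (n-th kernel sum at x)}`. -/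
theorem maximal_weak_type (d : ℕ) (hd : 1 ≤ d) (ρ : ℝ) (hρ0 : 0 ≤ ρ) (hρ1 : ρ < 1) :
    ∃ C : ℝ, 0 < C ∧
      ∀ F : ℕ → Fin d → IntervalPartition,
        (∀ n δ, (F n δ).Refines (F (n + 1) δ)) →
        ∀ f : (Fin d → ℝ) → ℝ, IntegrableOn f (rect (F 0)) →
        ∀ lam : ℝ, 0 < lam →
          volume {x | x ∈ rect (F 0) ∧
              ∃ n, lam < kern (F n) ρ f (fun δ => (F n δ).idx (x δ))} ≤
            ENNReal.ofReal (C * (∫ y in rect (F 0), |f y|) / lam) :=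
  maximal_weak_type_general d ρ hρ0 hρ1
end
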